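/- For each index i, the real function f(t) = ℓ(μ(t), B, ν), where μ(t) is μ with its i-th coordinate replaced by t, is twice differentiable at t = μ_i and its second derivative equals (ν + D) · (2·((Ω·r)_i)² − Ω_{ii}·(ν + q)) / (ν + q)², where r = y − μ. -/

import Mathlib

open Matrix

/-! Along the line `t ↦ μ(t)` the Mahalanobis term is a quadratic polynomial,
`q(t) = q - 2 (t - μᵢ) (Ω r)ᵢ + (t - μᵢ)² Ωᵢᵢ`, so `ℓ(μ(t)) = C - ((ν + D)/2) log g(t)` with
`g = 1 + q/ν > 0`, and the claim is the quotient rule `(log g)'' = (g'' g - g'²) / g²`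
evaluated at `t = μᵢ`. -/

/-- Multivariate t log-likelihood in the Cholesky precision parametrization `Ω = Bᵀ B`:
`ℓ(μ, B, ν) = log Γ((ν+D)/2) - log Γ(ν/2) - (D/2)·log ν - (D/2)·log π + log(det B)
  - ((ν+D)/2)·log(1 + q/ν)` with `q = ‖B(y-μ)‖²`. -/
noncomputable def tCholLL (D : ℕ) (y μ : Fin D → ℝ)
    (B : Matrix (Fin D) (Fin D) ℝ) (ν : ℝ) : ℝ :=
  Real.log (Real.Gamma ((ν + D) / 2)) - Real.log (Real.Gamma (ν / 2))
    - ((D : ℝ) / 2) * Real.log ν - ((D : ℝ) / 2) * Real.log Real.pi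
    + Real.log B.det
    - ((ν + D) / 2) * Real.log (1 + (∑ k, (B.mulVec (y - μ) k) ^ 2) / ν)

theorem Real.hasDerivAt_deriv_log_comp {g g' : ℝ → ℝ} {g'' x : ℝ}
    (hg : ∀ t, HasDerivAt g (g' t) t) (hg' : HasDerivAt g' g'' x) (hg0 : ∀ t, g t ≠ 0) :
    HasDerivAt (deriv fun t => Real.log (g t)) ((g'' * g x - g' x ^ 2) / g x ^ 2) x := by
  have hderiv : (deriv fun t => Real.log (g t)) = fun t => g' t / g t :=
    funext fun t => ((hg t).log (hg0 t)).deriv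
  rw [hderiv]
  exact (hg'.div (hg x) (hg0 x)).congr_deriv (by ring)

theorem hasDerivAt_quadratic (Q W S t₀ t : ℝ) :
    HasDerivAt (fun t => Q - 2 * (t - t₀) * W + (t - t₀) ^ 2 * S) (2 * ((t - t₀) * S - W)) t := by
  have h := (hasDerivAt_id t).sub_const t₀
  exact (((h.const_mul 2).mul_const W).const_sub Q |>.add ((h.pow 2).mul_const S)).congr_deriv
    (by simp only [mul_one, Nat.cast_ofNat, id_eq, Nat.add_one_sub_one, pow_one]; ring)

theorem dotProduct_self_sub_smul {ι R : Type*} [Fintype ι] [CommRing R] (c b : ι → R) (s : R) :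
    (c - s • b) ⬝ᵥ (c - s • b) = c ⬝ᵥ c - 2 * s * (b ⬝ᵥ c) + s ^ 2 * (b ⬝ᵥ b) := by
  simp only [sub_dotProduct, dotProduct_sub, smul_dotProduct, dotProduct_smul, smul_eq_mul,
    dotProduct_comm c b]
  ring

theorem Matrix.mulVec_sub_update {m n R : Type*} [Fintype n] [DecidableEq n] [CommRing R]
    (B : Matrix m n R) (y μ : n → R) (i : n) (t : R) :
    B *ᵥ (y - Function.update μ i t) = B *ᵥ (y - μ) - (t - μ i) • B.col i := by
  have : y - Function.update μ i t = (y - μ) - Pi.single i (t - μ i) := by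
    ext j
    rcases eq_or_ne j i with rfl | hj <;> simp [*]
  rw [this, mulVec_sub, mulVec_single, op_smul_eq_smul]

theorem Matrix.sum_mulVec_sub_update_sq {m n : Type*} [Fintype m] [Fintype n] [DecidableEq n]
    (B : Matrix m n ℝ) (y μ : n → ℝ) (i : n) (t : ℝ) :
    ∑ k, (B *ᵥ (y - Function.update μ i t)) k ^ 2
      = ∑ k, (B *ᵥ (y - μ)) k ^ 2 - 2 * (t - μ i) * ((Bᵀ * B) *ᵥ (y - μ)) i
        + (t - μ i) ^ 2 * (Bᵀ * B) i i := by
  have hsq : ∀ v : m → ℝ, ∑ k, v k ^ 2 = v ⬝ᵥ v := fun v => by simp [dotProduct, sq]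
  rw [hsq, hsq, mulVec_sub_update, dotProduct_self_sub_smul, ← mulVec_mulVec]
  rfl

theorem tChol_deriv2_mu_general (D : ℕ) (y μ : Fin D → ℝ) (ν : ℝ) (hν : 0 < ν)
    (B : Matrix (Fin D) (Fin D) ℝ) (i : Fin D) :
    (∀ᶠ t in nhds (μ i),
        DifferentiableAt ℝ (fun t : ℝ => tCholLL D y (Function.update μ i t) B ν) t) ∧
      HasDerivAt (deriv (fun t : ℝ => tCholLL D y (Function.update μ i t) B ν))
        ((ν + D) * (2 * ((B.transpose * B).mulVec (y - μ) i) ^ 2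
            - (B.transpose * B) i i * (ν + ∑ k, (B.mulVec (y - μ) k) ^ 2)) /
          (ν + ∑ k, (B.mulVec (y - μ) k) ^ 2) ^ 2)
        (μ i) := by
  set Q := ∑ k, (B *ᵥ (y - μ)) k ^ 2
  set W := ((Bᵀ * B) *ᵥ (y - μ)) i
  set S := (Bᵀ * B) i i
  set g : ℝ → ℝ := fun t => 1 + (∑ k, (B *ᵥ (y - Function.update μ i t)) k ^ 2) / ν with hg_def
  have hg0 : ∀ t, g t ≠ 0 := fun t => by positivity
  have hg : ∀ t, HasDerivAt g (2 * ((t - μ i) * S - W) / ν) t := fun t => by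
    simp only [hg_def, sum_mulVec_sub_update_sq]
    exact ((hasDerivAt_quadratic Q W S (μ i) t).div_const ν).const_add 1
  have hg' : HasDerivAt (fun t => 2 * ((t - μ i) * S - W) / ν) (2 * S / ν) (μ i) := by
    simpa using ((((hasDerivAt_id (μ i)).sub_const (μ i)).mul_const S).sub_const W
      |>.const_mul 2).div_const ν
  obtain ⟨C, hF⟩ : ∃ C, (fun t => tCholLL D y (Function.update μ i t) B ν)
      = fun t => C - (ν + D) / 2 * Real.log (g t) := ⟨_, rfl⟩
  rw [hF, deriv_const_sub', deriv_const_mul_field']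
  refine ⟨.of_forall fun t =>
    (((hg t).log (hg0 t)).const_mul _).const_sub _ |>.differentiableAt, ?_⟩
  refine ((Real.hasDerivAt_deriv_log_comp hg hg' hg0).const_mul ((ν + D) / 2)).neg.congr_deriv ?_
  have hQ : ν + Q ≠ 0 := by positivity
  simp only [g, Function.update_eq_self, sub_self, zero_mul]
  field_simp
  ring

/-- Second partial derivative of the multivariate t log-likelihood with respect to the
`i`-th coordinate of the location `μ`: the map `t ↦ ℓ(μ(t), B, ν)` is twice
differentiable at `t = μ i` and its second derivative equals
`(ν + D)·(2·((Ω r)_i)² - Ω_{ii}·(ν + q)) / (ν + q)²` with `Ω = Bᵀ B`, `r = y - μ` and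
`q = ‖B(y-μ)‖²`. -/
theorem tChol_deriv2_mu (D : ℕ) (hD : 1 ≤ D) (y μ : Fin D → ℝ) (ν : ℝ) (hν : 0 < ν)
    (B : Matrix (Fin D) (Fin D) ℝ)
    (hLT : ∀ k l : Fin D, k < l → B k l = 0)
    (hdiag : ∀ k, 0 < B k k) (i : Fin D) :
    (∀ᶠ t in nhds (μ i),
        DifferentiableAt ℝ (fun t : ℝ => tCholLL D y (Function.update μ i t) B ν) t) ∧
      HasDerivAt (deriv (fun t : ℝ => tCholLL D y (Function.update μ i t) B ν))
        ((ν + D) * (2 * ((B.transpose * B).mulVec (y - μ) i) ^ 2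
            - (B.transpose * B) i i * (ν + ∑ k, (B.mulVec (y - μ) k) ^ 2)) /
          (ν + ∑ k, (B.mulVec (y - μ) k) ^ 2) ^ 2)
        (μ i) :=
  tChol_deriv2_mu_general D y μ ν hν B i
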